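/- Let α ∈ ℝ^n be irrational with uniform Diophantine exponent ω̂_α, and let (q_k)_{k∈ℕ} be its sequence of best simultaneous Diophantine approximation denominators. Then ω̂_α = sup{ν > 0 : limsup_{k→∞} q_{k+1}^ν·⟨q_k·α⟩ < ∞}. In particular, for any ω < ω̂_α the sequence (q_{k+1}^ω·⟨q_k·α⟩)_{k∈ℕ} is bounded. -/

import Mathlib

open MeasureTheory Matrix Filter
open scoped ENNReal

noncomputable section

abbrev SLR (n : ℕ) := Matrix.SpecialLinearGroup (Fin n) ℝ
abbrev SLZ (n : ℕ) := Matrix.SpecialLinearGroup (Fin n) ℤ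

instance SLRTop (n : ℕ) : TopologicalSpace (SLR n) :=
  inferInstanceAs (TopologicalSpace {A : Matrix (Fin n) (Fin n) ℝ // A.det = 1})

def ιR (n : ℕ) : SLZ n →* SLR n := Matrix.SpecialLinearGroup.map (Int.castRingHom ℝ)

def SLZsub (n : ℕ) : Subgroup (SLR n) := (ιR n).range

def en (n : ℕ) : Fin n → ℤ := fun i => if (i : ℕ) = n - 1 then 1 else 0
def enR (n : ℕ) : Fin n → ℝ := fun i => if (i : ℕ) = n - 1 then 1 else 0
def enM (n q : ℕ) : Fin n → ZMod q := fun i => if (i : ℕ) = n - 1 then 1 else 0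

def ιM (n q : ℕ) : SLZ n →* Matrix.SpecialLinearGroup (Fin n) (ZMod q) :=
  Matrix.SpecialLinearGroup.map (Int.castRingHom (ZMod q))

def Gamma1 (n q : ℕ) : Subgroup (SLZ n) where
  carrier := {γ | Matrix.vecMul (enM n q) ((ιM n q γ : Matrix.SpecialLinearGroup (Fin n) (ZMod q)) : Matrix (Fin n) (Fin n) (ZMod q)) = enM n q}
  one_mem' := by simp
  mul_mem' := by
    intro a b ha hb
    have ha' : Matrix.vecMul (enM n q) ((ιM n q a : Matrix.SpecialLinearGroup (Fin n) (ZMod q)) : Matrix (Fin n) (Fin n) (ZMod q)) = enM n q := ha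
    have hb' : Matrix.vecMul (enM n q) ((ιM n q b : Matrix.SpecialLinearGroup (Fin n) (ZMod q)) : Matrix (Fin n) (Fin n) (ZMod q)) = enM n q := hb
    show Matrix.vecMul (enM n q) ((ιM n q (a * b) : Matrix.SpecialLinearGroup (Fin n) (ZMod q)) : Matrix (Fin n) (Fin n) (ZMod q)) = enM n q
    rw [_root_.map_mul, Matrix.SpecialLinearGroup.coe_mul, ← Matrix.vecMul_vecMul, ha', hb']
  inv_mem' := by
    intro a ha
    have ha' : Matrix.vecMul (enM n q) ((ιM n q a : Matrix.SpecialLinearGroup (Fin n) (ZMod q)) : Matrix (Fin n) (Fin n) (ZMod q)) = enM n q := ha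
    show Matrix.vecMul (enM n q) ((ιM n q a⁻¹ : Matrix.SpecialLinearGroup (Fin n) (ZMod q)) : Matrix (Fin n) (Fin n) (ZMod q)) = enM n q
    rw [_root_.map_inv]
    have key : ((ιM n q a : Matrix.SpecialLinearGroup (Fin n) (ZMod q)) : Matrix (Fin n) (Fin n) (ZMod q)) *
        (((ιM n q a)⁻¹ : Matrix.SpecialLinearGroup (Fin n) (ZMod q)) : Matrix (Fin n) (Fin n) (ZMod q)) = 1 := by
      rw [← Matrix.SpecialLinearGroup.coe_mul, mul_inv_cancel]
      simp
    calc Matrix.vecMul (enM n q) (((ιM n q a)⁻¹ : Matrix.SpecialLinearGroup (Fin n) (ZMod q)) : Matrix (Fin n) (Fin n) (ZMod q))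
        = Matrix.vecMul (Matrix.vecMul (enM n q) ((ιM n q a : Matrix.SpecialLinearGroup (Fin n) (ZMod q)) : Matrix (Fin n) (Fin n) (ZMod q))) (((ιM n q a)⁻¹ : Matrix.SpecialLinearGroup (Fin n) (ZMod q)) : Matrix (Fin n) (Fin n) (ZMod q)) := by rw [ha']
      _ = Matrix.vecMul (enM n q) (((ιM n q a : Matrix.SpecialLinearGroup (Fin n) (ZMod q)) : Matrix (Fin n) (Fin n) (ZMod q)) * (((ιM n q a)⁻¹ : Matrix.SpecialLinearGroup (Fin n) (ZMod q)) : Matrix (Fin n) (Fin n) (ZMod q))) := Matrix.vecMul_vecMul _ _ _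
      _ = enM n q := by rw [key, Matrix.vecMul_one]

def LZ (n : ℕ) : Subgroup (SLZ n) where
  carrier := {γ | Matrix.vecMul (en n) ((γ : SLZ n) : Matrix (Fin n) (Fin n) ℤ) = en n}
  one_mem' := by simp
  mul_mem' := by
    intro a b ha hb
    have ha' : Matrix.vecMul (en n) ((a : SLZ n) : Matrix (Fin n) (Fin n) ℤ) = en n := ha
    have hb' : Matrix.vecMul (en n) ((b : SLZ n) : Matrix (Fin n) (Fin n) ℤ) = en n := hb
    show Matrix.vecMul (en n) ((a * b : SLZ n) : Matrix (Fin n) (Fin n) ℤ) = en n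
    rw [Matrix.SpecialLinearGroup.coe_mul, ← Matrix.vecMul_vecMul, ha', hb']
  inv_mem' := by
    intro a ha
    have ha' : Matrix.vecMul (en n) ((a : SLZ n) : Matrix (Fin n) (Fin n) ℤ) = en n := ha
    show Matrix.vecMul (en n) ((a⁻¹ : SLZ n) : Matrix (Fin n) (Fin n) ℤ) = en n
    have key : ((a : Matrix (Fin n) (Fin n) ℤ)) * ((a⁻¹ : SLZ n) : Matrix (Fin n) (Fin n) ℤ) = 1 := by
      rw [← Matrix.SpecialLinearGroup.coe_mul, mul_inv_cancel]
      simp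
    calc Matrix.vecMul (en n) ((a⁻¹ : SLZ n) : Matrix (Fin n) (Fin n) ℤ)
        = Matrix.vecMul (Matrix.vecMul (en n) (a : Matrix (Fin n) (Fin n) ℤ)) ((a⁻¹ : SLZ n) : Matrix (Fin n) (Fin n) ℤ) := by rw [ha']
      _ = Matrix.vecMul (en n) ((a : Matrix (Fin n) (Fin n) ℤ) * ((a⁻¹ : SLZ n) : Matrix (Fin n) (Fin n) ℤ)) := Matrix.vecMul_vecMul _ _ _
      _ = en n := by rw [key, Matrix.vecMul_one]

/-- The map from the coset space `(Γ ∩ L_n)\Γ` to `ℤⁿ` induced by `γ ↦ e_n·γ`. -/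
def cosetVec (n : ℕ) (Γ : Subgroup (SLZ n)) :
    Quotient (QuotientGroup.rightRel ((LZ n).subgroupOf Γ)) → (Fin n → ℤ) :=
  fun c => Quotient.liftOn c
    (fun γ => Matrix.vecMul (en n) (((γ : Γ) : SLZ n) : Matrix (Fin n) (Fin n) ℤ))
    (by
      intro a b hab
      have hab' : (b * a⁻¹ : Γ) ∈ (LZ n).subgroupOf Γ := QuotientGroup.rightRel_apply.mp hab
      have h : Matrix.vecMul (en n) (((b * a⁻¹ : Γ) : SLZ n) : Matrix (Fin n) (Fin n) ℤ) = en n :=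
        Subgroup.mem_subgroupOf.mp hab'
      show Matrix.vecMul (en n) (((a : Γ) : SLZ n) : Matrix (Fin n) (Fin n) ℤ)
          = Matrix.vecMul (en n) (((b : Γ) : SLZ n) : Matrix (Fin n) (Fin n) ℤ)
      have hb : (((b : Γ) : SLZ n) : Matrix (Fin n) (Fin n) ℤ)
          = (((b * a⁻¹ : Γ) : SLZ n) : Matrix (Fin n) (Fin n) ℤ) * (((a : Γ) : SLZ n) : Matrix (Fin n) (Fin n) ℤ) := by
        rw [← Matrix.SpecialLinearGroup.coe_mul]
        congr 1
        simp only [Subgroup.coe_mul, InvMemClass.coe_inv]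
        group
        all_goals rfl
      rw [hb, ← Matrix.vecMul_vecMul, h])

/-- The incomplete Eisenstein series `Θ_f^Γ`: the sum of `f(e_n·γ·g)` over the
coset space `(Γ ∩ L_n)\Γ`. -/
def Theta (n : ℕ) (Γ : Subgroup (SLZ n)) (f : (Fin n → ℝ) → ℂ) (g : SLR n) : ℂ :=
  ∑' c : Quotient (QuotientGroup.rightRel ((LZ n).subgroupOf Γ)),
    f (Matrix.vecMul (fun i => ((cosetVec n Γ c) i : ℝ)) (g : Matrix (Fin n) (Fin n) ℝ))
/-- The real stabilizer `L_n ≤ SL_n(ℝ)` of `e_n`. -/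
def LR (n : ℕ) : Subgroup (SLR n) where
  carrier := {g | Matrix.vecMul (enR n) ((g : SLR n) : Matrix (Fin n) (Fin n) ℝ) = enR n}
  one_mem' := by simp
  mul_mem' := by
    intro a b ha hb
    have ha' : Matrix.vecMul (enR n) ((a : SLR n) : Matrix (Fin n) (Fin n) ℝ) = enR n := ha
    have hb' : Matrix.vecMul (enR n) ((b : SLR n) : Matrix (Fin n) (Fin n) ℝ) = enR n := hb
    show Matrix.vecMul (enR n) ((a * b : SLR n) : Matrix (Fin n) (Fin n) ℝ) = enR n
    rw [Matrix.SpecialLinearGroup.coe_mul, ← Matrix.vecMul_vecMul, ha', hb']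
  inv_mem' := by
    intro a ha
    have ha' : Matrix.vecMul (enR n) ((a : SLR n) : Matrix (Fin n) (Fin n) ℝ) = enR n := ha
    show Matrix.vecMul (enR n) ((a⁻¹ : SLR n) : Matrix (Fin n) (Fin n) ℝ) = enR n
    have key : ((a : Matrix (Fin n) (Fin n) ℝ)) * ((a⁻¹ : SLR n) : Matrix (Fin n) (Fin n) ℝ) = 1 := by
      rw [← Matrix.SpecialLinearGroup.coe_mul, mul_inv_cancel]; simp
    calc Matrix.vecMul (enR n) ((a⁻¹ : SLR n) : Matrix (Fin n) (Fin n) ℝ)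
        = Matrix.vecMul (Matrix.vecMul (enR n) (a : Matrix (Fin n) (Fin n) ℝ)) ((a⁻¹ : SLR n) : Matrix (Fin n) (Fin n) ℝ) := by rw [ha']
      _ = Matrix.vecMul (enR n) ((a : Matrix (Fin n) (Fin n) ℝ) * ((a⁻¹ : SLR n) : Matrix (Fin n) (Fin n) ℝ)) := Matrix.vecMul_vecMul _ _ _
      _ = enR n := by rw [key, Matrix.vecMul_one]

/-- The identity component `P_n ≤ SL_n(ℝ)` of the maximal parabolic subgroup fixing the
line spanned by `e_n`: those `g` with `e_n·g = c·e_n` for some `c > 0`. -/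
def PR (n : ℕ) : Subgroup (SLR n) where
  carrier := {g | ∃ c : ℝ, 0 < c ∧
    Matrix.vecMul (enR n) ((g : SLR n) : Matrix (Fin n) (Fin n) ℝ) = c • enR n}
  one_mem' := ⟨1, one_pos, by simp⟩
  mul_mem' := by
    rintro a b ⟨c, hc, hca⟩ ⟨d, hd, hdb⟩
    refine ⟨c * d, mul_pos hc hd, ?_⟩
    show Matrix.vecMul (enR n) ((a * b : SLR n) : Matrix (Fin n) (Fin n) ℝ) = (c * d) • enR n
    rw [Matrix.SpecialLinearGroup.coe_mul, ← Matrix.vecMul_vecMul, hca,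
      Matrix.smul_vecMul, hdb, smul_smul]
  inv_mem' := by
    rintro a ⟨c, hc, hca⟩
    refine ⟨c⁻¹, inv_pos.mpr hc, ?_⟩
    show Matrix.vecMul (enR n) ((a⁻¹ : SLR n) : Matrix (Fin n) (Fin n) ℝ) = c⁻¹ • enR n
    have key : ((a : Matrix (Fin n) (Fin n) ℝ)) * ((a⁻¹ : SLR n) : Matrix (Fin n) (Fin n) ℝ) = 1 := by
      rw [← Matrix.SpecialLinearGroup.coe_mul, mul_inv_cancel]; simp
    have h2 : c • Matrix.vecMul (enR n) ((a⁻¹ : SLR n) : Matrix (Fin n) (Fin n) ℝ) = enR n := by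
      rw [← Matrix.smul_vecMul, ← hca, Matrix.vecMul_vecMul, key, Matrix.vecMul_one]
    have h3 := congrArg (fun w => c⁻¹ • w) h2
    simpa [smul_smul, inv_mul_cancel₀ (ne_of_gt hc)] using h3
/-- The Euclidean norm on `ℝⁿ`. -/
def eNorm (n : ℕ) (v : Fin n → ℝ) : ℝ := Real.sqrt (∑ i : Fin n, (v i) ^ 2)

/-- The standard quadratic form `Q₀` of signature `(p₁, n − p₁)`. -/
def Q0 (n p₁ : ℕ) (v : Fin n → ℝ) : ℝ := ∑ i : Fin n, if (i : ℕ) < p₁ then (v i) ^ 2 else -((v i) ^ 2)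

/-- The Riemann zeta value `ζ(n) = Σ_{k ≥ 1} k⁻ⁿ`. -/
def zetaN (n : ℕ) : ℝ := ∑' k : {k : ℕ // 0 < k}, ((k.1 : ℝ))⁻¹ ^ n

/-- `ζ_q(n) = Σ_{k ≥ 1, gcd(k,q) = 1} k⁻ⁿ`. -/
def zetaCop (q n : ℕ) : ℝ := ∑' k : {k : ℕ // 0 < k ∧ Nat.Coprime k q}, ((k.1 : ℝ))⁻¹ ^ n

/-- The Siegel transform `f̂(Λ) = Σ_{v ∈ Λ∖{0}} f(v)`. -/
def Siegel (n : ℕ) (f : (Fin n → ℝ) → ℂ) (Λ : Set (Fin n → ℝ)) : ℂ :=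
  ∑' v : {x : Fin n → ℝ // x ∈ Λ ∧ x ≠ 0}, f v

/-- The affine lattice `(ℤⁿ + α)·g` (row vector action). -/
def affLat (n : ℕ) (α : Fin n → ℝ) (g : SLR n) : Set (Fin n → ℝ) :=
  {x | ∃ v : Fin n → ℤ, x = Matrix.vecMul (fun i => (v i : ℝ) + α i) ((g : SLR n) : Matrix (Fin n) (Fin n) ℝ)}

/-- The number of points of `Λ` in `A`, valued in `ℝ≥0∞`. -/
def latCount (n : ℕ) (Λ A : Set (Fin n → ℝ)) : ℝ≥0∞ := ∑' _ : ↥(Λ ∩ A), (1 : ℝ≥0∞)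

/-- The discrepancy `D(Λ,A) = |#(Λ∩A) − vol(A)|`, valued in `ℝ≥0∞`. -/
def disc (n : ℕ) (Λ A : Set (Fin n → ℝ)) : ℝ≥0∞ :=
  (latCount n Λ A - volume A) + (volume A - latCount n Λ A)

/-- `⟨α⟩`: the sup-norm distance from `α` to `ℤⁿ`. -/
def distZ (n : ℕ) (α : Fin n → ℝ) : ℝ := ⨅ v : Fin n → ℤ, ‖α - fun i => (v i : ℝ)‖

/-- `m` is a best simultaneous Diophantine approximation denominator of `α`. -/
def IsBestDenom (n : ℕ) (α : Fin n → ℝ) (m : ℕ) : Prop :=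
  0 < m ∧ ∀ l : ℕ, 1 ≤ l → l < m →
    distZ n (fun i => (m : ℝ) * α i) < distZ n (fun i => (l : ℝ) * α i)

/-- The defining set of the Diophantine exponent `ω_α`. -/
def omegaSet (n : ℕ) (α : Fin n → ℝ) : Set ℝ :=
  {ν | 0 < ν ∧ ∀ T : ℝ, ∃ t : ℝ, T < t ∧ ∃ m : ℤ, m ≠ 0 ∧ |(m : ℝ)| < t ∧
    distZ n (fun i => (m : ℝ) * α i) < t ^ (-ν)}

/-- The defining set of the uniform Diophantine exponent `ω̂_α`. -/
def omegaHatSet (n : ℕ) (α : Fin n → ℝ) : Set ℝ :=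
  {ν | 0 < ν ∧ ∃ T : ℝ, ∀ t : ℝ, T ≤ t → ∃ m : ℤ, m ≠ 0 ∧ |(m : ℝ)| < t ∧
    distZ n (fun i => (m : ℝ) * α i) < t ^ (-ν)}

/-- The Diophantine exponent `ω_α`. -/
def dioExp (n : ℕ) (α : Fin n → ℝ) : ℝ := sSup (omegaSet n α)

/-- The uniform Diophantine exponent `ω̂_α`. -/
def dioExpHat (n : ℕ) (α : Fin n → ℝ) : ℝ := sSup (omegaHatSet n α)

/-- `α ∈ ℝⁿ` is an irrational vector, i.e. `α ∉ ℚⁿ`. -/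
def IsIrrationalVec (n : ℕ) (α : Fin n → ℝ) : Prop := ∀ v : Fin n → ℚ, α ≠ fun i => (v i : ℝ)

/-- The open Euclidean ball `B_t` of radius `t` centered at the origin. -/
def ball0 (n : ℕ) (t : ℝ) : Set (Fin n → ℝ) := {v | eNorm n v < t}

/-! If `ν < ω̂_α`, the uniform condition at `t = q_{k+1}` is met by some `l < q_{k+1}`, and every
such `l` has `⟨l α⟩ ≥ ⟨q_k α⟩` (descending from `l` through smaller denominators that approximate
no worse ends at a best denominator `q_j ≤ l`, so `j ≤ k`); hence `q_{k+1}^ν ⟨q_k α⟩ < 1` eventually. Conversely, if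
`q_{k+1}^ν ⟨q_k α⟩ ≤ C` eventually, then for `q_k < t ≤ q_{k+1}` the denominator `q_k` gives
`⟨q_k α⟩ ≤ C t^{-ν} < t^{-ν'}` for every `ν' < ν` once `t` is large. The two sets of exponents
thus agree up to lowering exponents, so their suprema coincide. -/

lemma distZ_nonneg (n : ℕ) (β : Fin n → ℝ) : 0 ≤ distZ n β :=
  Real.iInf_nonneg fun _ => norm_nonneg _

lemma distZ_neg (n : ℕ) (β : Fin n → ℝ) : distZ n (-β) = distZ n β := by
  unfold distZ
  rw [← (Equiv.neg (Fin n → ℤ)).iInf_comp]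
  congr 1
  funext v
  rw [← norm_neg]
  congr 1
  funext i
  simp
  ring

lemma distZ_intCast_mul_eq_natAbs (n : ℕ) (α : Fin n → ℝ) (m : ℤ) :
    distZ n (fun i => (m : ℝ) * α i) = distZ n (fun i => (m.natAbs : ℝ) * α i) := by
  obtain ⟨k, rfl | rfl⟩ := Int.eq_nat_or_neg m
  · simp
  · rw [← distZ_neg]
    congr 1
    funext i
    simp

lemma limsup_ofReal_lt_top_iff {ι : Type*} {l : Filter ι} {u : ι → ℝ} :
    limsup (fun i => ENNReal.ofReal (u i)) l < ⊤ ↔ ∃ C : ℝ, ∀ᶠ i in l, u i ≤ C := by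
  constructor
  · intro h
    obtain ⟨b, hb, hbtop⟩ := exists_between h
    refine ⟨b.toReal, (eventually_lt_of_limsup_lt hb).mono fun i hi => ?_⟩
    exact (ENNReal.ofReal_le_iff_le_toReal hbtop.ne).1 hi.le
  · rintro ⟨C, hC⟩
    exact (limsup_le_of_le (by isBoundedDefault)
      (hC.mono fun i hi => ENNReal.ofReal_le_ofReal hi)).trans_lt ENNReal.ofReal_lt_top

lemma Real.sSup_eq_of_subset_of_forall_lt_mem {A B : Set ℝ} (hAB : A ⊆ B)
    (hpos : ∀ b ∈ B, 0 < b) (hB : ∀ b ∈ B, ∀ a, 0 < a → a < b → a ∈ A) :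
    sSup A = sSup B := by
  rcases B.eq_empty_or_nonempty with rfl | ⟨b₀, hb₀⟩
  · rw [Set.subset_empty_iff.1 hAB]
  by_cases hbdd : BddAbove B
  · have hA : A.Nonempty :=
      ⟨b₀ / 2, hB b₀ hb₀ _ (half_pos (hpos b₀ hb₀)) (half_lt_self (hpos b₀ hb₀))⟩
    refine le_antisymm (csSup_le_csSup hbdd hA hAB) (csSup_le ⟨b₀, hb₀⟩ fun b hb => ?_)
    refine le_of_forall_lt_imp_le_of_dense fun c hc => ?_
    have hmem : max c (b / 2) ∈ A := hB b hb _ (lt_max_of_lt_right (half_pos (hpos b hb)))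
      (max_lt hc (half_lt_self (hpos b hb)))
    exact (le_max_left _ _).trans (le_csSup (hbdd.mono hAB) hmem)
  · have hAbdd : ¬ BddAbove A := by
      rintro ⟨M, hM⟩
      refine hbdd ⟨max M 0, fun b hb => not_lt.1 fun hlt => ?_⟩
      obtain ⟨a, hMa, hab⟩ := exists_between hlt
      exact (hM (hB b hb a ((le_max_right M 0).trans_lt hMa) hab)).not_gt
        ((le_max_left M 0).trans_lt hMa)
    rw [Real.sSup_of_not_bddAbove hAbdd, Real.sSup_of_not_bddAbove hbdd]

lemma eventually_mul_rpow_neg_lt_rpow_neg (C : ℝ) {ν ν' : ℝ} (h : ν' < ν) :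
    ∀ᶠ t : ℝ in atTop, C * t ^ (-ν) < t ^ (-ν') := by
  have hlim : Tendsto (fun t : ℝ => C * t ^ (-(ν - ν'))) atTop (nhds 0) := by
    simpa using (tendsto_rpow_neg_atTop (sub_pos.2 h)).const_mul C
  filter_upwards [hlim.eventually (gt_mem_nhds one_pos), eventually_gt_atTop 0] with t ht ht0
  calc C * t ^ (-ν) = C * t ^ (-(ν - ν')) * t ^ (-ν') := by
        rw [mul_assoc, ← Real.rpow_add ht0]; ring_nf
    _ < 1 * t ^ (-ν') := mul_lt_mul_of_pos_right ht (by positivity)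
    _ = t ^ (-ν') := one_mul _

lemma StrictMono.exists_lt_le_succ {q : ℕ → ℕ} (hq : StrictMono q) {t : ℝ} (ht : (q 0 : ℝ) < t) :
    ∃ k, (q k : ℝ) < t ∧ t ≤ q (k + 1) := by
  classical
  have hex : ∃ j, t ≤ q (j + 1) :=
    ⟨⌈t⌉₊, (Nat.le_ceil t).trans (by exact_mod_cast (Nat.le_succ _).trans hq.le_apply)⟩
  refine ⟨Nat.find hex, ?_, Nat.find_spec hex⟩
  rcases Nat.eq_zero_or_eq_succ_pred (Nat.find hex) with h | h
  · rwa [h]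
  · rw [h]
    exact not_le.1 (Nat.find_min hex (h ▸ Nat.lt_succ_self _))

lemma exists_isBestDenom_le {n : ℕ} {α : Fin n → ℝ} {l : ℕ} (hl : 1 ≤ l) :
    ∃ m, IsBestDenom n α m ∧ m ≤ l ∧
      distZ n (fun i => (m : ℝ) * α i) ≤ distZ n (fun i => (l : ℝ) * α i) := by
  induction l using Nat.strong_induction_on with
  | _ l ih =>
    by_cases hl_best : IsBestDenom n α l
    · exact ⟨l, hl_best, le_rfl, le_rfl⟩
    · simp only [IsBestDenom, not_and, not_forall, not_lt] at hl_best
      obtain ⟨l', hl', hl'l, hle⟩ := hl_best hl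
      obtain ⟨m, hm, hml', hdm⟩ := ih l' hl'l hl'
      exact ⟨m, hm, hml'.trans hl'l.le, hdm.trans hle⟩

section BestDenominators

variable {n : ℕ} {α : Fin n → ℝ} {qk : ℕ → ℕ}

lemma distZ_le_of_lt_succ (hmono : StrictMono qk) (hbest : ∀ k, IsBestDenom n α (qk k))
    (hall : ∀ m, IsBestDenom n α m → ∃ k, qk k = m) {k l : ℕ} (hl : 1 ≤ l)
    (hlk : l < qk (k + 1)) :
    distZ n (fun i => (qk k : ℝ) * α i) ≤ distZ n (fun i => (l : ℝ) * α i) := by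
  obtain ⟨m, hm, hml, hdm⟩ := exists_isBestDenom_le (α := α) hl
  obtain ⟨j, rfl⟩ := hall m hm
  have hjk : j ≤ k := Nat.lt_succ_iff.1 (hmono.lt_iff_lt.1 (hml.trans_lt hlk))
  refine le_trans ?_ hdm
  rcases hjk.eq_or_lt with rfl | hjk
  · exact le_rfl
  · exact ((hbest k).2 _ (hbest j).1 (hmono hjk)).le

lemma eventually_rpow_mul_distZ_lt_one (hmono : StrictMono qk)
    (hbest : ∀ k, IsBestDenom n α (qk k)) (hall : ∀ m, IsBestDenom n α m → ∃ k, qk k = m)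
    {ν : ℝ} (hν : ν ∈ omegaHatSet n α) :
    ∀ᶠ k in atTop, (qk (k + 1) : ℝ) ^ ν * distZ n (fun i => (qk k : ℝ) * α i) < 1 := by
  obtain ⟨-, T, hT⟩ := hν
  have hq : Tendsto (fun k => (qk (k + 1) : ℝ)) atTop atTop :=
    tendsto_natCast_atTop_atTop.comp (hmono.tendsto_atTop.comp (tendsto_add_atTop_nat 1))
  filter_upwards [hq.eventually_ge_atTop T, hq.eventually_gt_atTop 0] with k hTq hq0
  obtain ⟨m, hm0, hmq, hdm⟩ := hT _ hTq
  have hd : distZ n (fun i => (qk k : ℝ) * α i) < (qk (k + 1) : ℝ) ^ (-ν) := by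
    refine (distZ_le_of_lt_succ hmono hbest hall (Int.natAbs_pos.2 hm0) ?_).trans_lt ?_
    · have : (m.natAbs : ℝ) < qk (k + 1) := by rwa [Nat.cast_natAbs, Int.cast_abs]
      exact_mod_cast this
    · rwa [← distZ_intCast_mul_eq_natAbs]
  calc (qk (k + 1) : ℝ) ^ ν * distZ n (fun i => (qk k : ℝ) * α i)
      < (qk (k + 1) : ℝ) ^ ν * (qk (k + 1) : ℝ) ^ (-ν) :=
        mul_lt_mul_of_pos_left hd (by positivity)
    _ = 1 := by rw [← Real.rpow_add hq0, add_neg_cancel, Real.rpow_zero]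

lemma mem_omegaHatSet_of_eventually_le (hmono : StrictMono qk)
    (hbest : ∀ k, IsBestDenom n α (qk k)) {ν ν' C : ℝ} (hν' : 0 < ν') (hν'ν : ν' < ν)
    (hC : ∀ᶠ k in atTop, (qk (k + 1) : ℝ) ^ ν * distZ n (fun i => (qk k : ℝ) * α i) ≤ C) :
    ν' ∈ omegaHatSet n α := by
  obtain ⟨k₀, hk₀⟩ := eventually_atTop.1 hC
  have hq0 : ∀ k, (0 : ℝ) < qk k := fun k => by exact_mod_cast (hbest k).1
  refine ⟨hν', eventually_atTop.1 ?_⟩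
  filter_upwards [eventually_gt_atTop (qk k₀ : ℝ), eventually_mul_rpow_neg_lt_rpow_neg C hν'ν]
    with t hk₀t hCt
  obtain ⟨k, hkt, htk⟩ := hmono.exists_lt_le_succ
    ((Nat.cast_le.2 (hmono.monotone k₀.zero_le)).trans_lt hk₀t)
  have hk : k₀ ≤ k := Nat.lt_succ_iff.1 (hmono.lt_iff_lt.1 (by exact_mod_cast hk₀t.trans_le htk))
  have ht0 : 0 < t := (hq0 k).trans hkt
  refine ⟨qk k, by exact_mod_cast (hbest k).1.ne', by simpa using hkt, ?_⟩
  calc distZ n (fun i => ((qk k : ℤ) : ℝ) * α i)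
      = (qk (k + 1) : ℝ) ^ (-ν) *
          ((qk (k + 1) : ℝ) ^ ν * distZ n (fun i => (qk k : ℝ) * α i)) := by
        rw [← mul_assoc, ← Real.rpow_add (hq0 _), neg_add_cancel, Real.rpow_zero, one_mul]
        simp
    _ ≤ t ^ (-ν) * C :=
        mul_le_mul (Real.rpow_le_rpow_of_nonpos ht0 htk (by linarith))
          (hk₀ k hk) (mul_nonneg (by positivity) (distZ_nonneg _ _)) (Real.rpow_nonneg ht0.le _)
    _ < t ^ (-ν') := by rw [mul_comm]; exact hCt

end BestDenominators

theorem statement19_general (n : ℕ) (α : Fin n → ℝ)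
    (qk : ℕ → ℕ) (hmono : StrictMono qk) (hbest : ∀ k, IsBestDenom n α (qk k))
    (hall : ∀ m : ℕ, IsBestDenom n α m → ∃ k, qk k = m) :
    dioExpHat n α = sSup {ν : ℝ | 0 < ν ∧
      Filter.limsup (fun k =>
          ENNReal.ofReal ((qk (k + 1) : ℝ) ^ ν * distZ n (fun i => (qk k : ℝ) * α i)))
        Filter.atTop < ⊤} ∧
    ∀ ω : ℝ, 0 < ω → ω < dioExpHat n α →
      ∃ C : ℝ, ∀ k : ℕ, (qk (k + 1) : ℝ) ^ ω * distZ n (fun i => (qk k : ℝ) * α i) ≤ C := by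
  refine ⟨Real.sSup_eq_of_subset_of_forall_lt_mem (fun ν hν => ⟨hν.1, ?_⟩) (fun ν hν => hν.1)
    fun ν hν ν' hν' hν'ν => ?_, fun ω hω hωlt => ?_⟩
  · exact limsup_ofReal_lt_top_iff.2
      ⟨1, (eventually_rpow_mul_distZ_lt_one hmono hbest hall hν).mono fun _ h => h.le⟩
  · obtain ⟨C, hC⟩ := limsup_ofReal_lt_top_iff.1 hν.2
    exact mem_omegaHatSet_of_eventually_le hmono hbest hν' hν'ν hC
  · have hne : (omegaHatSet n α).Nonempty := by
      by_contra h
      rw [Set.not_nonempty_iff_eq_empty] at h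
      simp only [dioExpHat, h, Real.sSup_empty] at hωlt
      linarith
    obtain ⟨ν, hν, hων⟩ := exists_lt_of_lt_csSup hne hωlt
    have hle : ∀ᶠ k in atTop,
        (qk (k + 1) : ℝ) ^ ω * distZ n (fun i => (qk k : ℝ) * α i) ≤ 1 :=
      (eventually_rpow_mul_distZ_lt_one hmono hbest hall hν).mono fun k hk =>
        (mul_le_mul_of_nonneg_right (Real.rpow_le_rpow_of_exponent_le
          (by exact_mod_cast (hbest _).1) hων.le) (distZ_nonneg _ _)).trans hk.le
    obtain ⟨C, hC⟩ := (isBoundedUnder_of_eventually_le hle).bddAbove_range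
    exact ⟨C, fun k => hC ⟨k, rfl⟩⟩

/-- Lemma 5.2 of the paper: characterization of the uniform Diophantine
exponent `ω̂_α` in terms of the sequence of best approximation denominators; in particular,
for every `ω < ω̂_α` the sequence `q_{k+1}^ω·⟨q_k α⟩` is bounded. -/
theorem statement19 (n : ℕ) (α : Fin n → ℝ) (hirr : IsIrrationalVec n α)
    (qk : ℕ → ℕ) (hmono : StrictMono qk) (hbest : ∀ k, IsBestDenom n α (qk k))
    (hall : ∀ m : ℕ, IsBestDenom n α m → ∃ k, qk k = m) :
    dioExpHat n α = sSup {ν : ℝ | 0 < ν ∧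
      Filter.limsup (fun k =>
          ENNReal.ofReal ((qk (k + 1) : ℝ) ^ ν * distZ n (fun i => (qk k : ℝ) * α i)))
        Filter.atTop < ⊤} ∧
    ∀ ω : ℝ, 0 < ω → ω < dioExpHat n α →
      ∃ C : ℝ, ∀ k : ℕ, (qk (k + 1) : ℝ) ^ ω * distZ n (fun i => (qk k : ℝ) * α i) ≤ C :=
  statement19_general n α qk hmono hbest hall
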